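/- arXiv:2409.10182 — 3 statements merged into one kernel-verified Lean document; each statement's English description precedes it below -/
import Mathlib

section
/- For N prime and local dimension d, the trace of the momentum projector satisfies Tr(T_k) = d^N + d(N-1) if k = 0, and Tr(T_k) = d^N - d otherwise. -/
/-!
`T` is the permutation matrix of the translation `r ↦ r (· + 1)` of configurations
`r : Fin N → Fin d`, so `Tr (T ^ j)` counts the configurations invariant under translation by `j`.
For `0 < j < N` with `N` prime, `j` generates `Fin N`, so only the `d` constant configurations are
invariant, while `T ^ 0 = 1` has trace `d ^ N`. Hence `Tr T_k = d ^ N + d (S - 1)` with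
`S = ∑_{j<N} e^{2πijk/N}`, a geometric sum of the root of unity `e^{2πik/N}`, equal to `N` if
`k = 0` and to `0` otherwise.
-/

open Matrix Finset

/-- The cyclic shift (translation) operator `T` on `(ℂ^d)^{⊗N}`. -/
noncomputable def shiftT (d N : ℕ) [NeZero N] :
    Matrix (Fin N → Fin d) (Fin N → Fin d) ℂ :=
  Matrix.of fun r c => if r = (fun j => c (j - 1)) then 1 else 0

/-- `T_k = Σ_{j=0}^{N-1} e^{2πijk/N} T^j`. -/
noncomputable def momProj (d N : ℕ) [NeZero N] (k : ℕ) :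
    Matrix (Fin N → Fin d) (Fin N → Fin d) ℂ :=
  ∑ j ∈ Finset.range N,
    Complex.exp (2 * (Real.pi : ℂ) * Complex.I * (j : ℂ) * (k : ℂ) / (N : ℂ)) • shiftT d N ^ j

namespace Equiv.Perm

variable {n : Type*} [DecidableEq n] [Fintype n]

lemma permMatrix_pow (R : Type*) [Semiring R] (σ : Perm n) (j : ℕ) :
    (σ ^ j).permMatrix R = σ.permMatrix R ^ j := by
  induction j with
  | zero => simp
  | succ j ih => rw [pow_succ, Matrix.permMatrix_mul, ih, pow_succ']

end Equiv.Perm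

section Translation

variable {G α : Type*} [AddGroup G]

def translatePerm (x : G) : Equiv.Perm (G → α) where
  toFun r i := r (i + x)
  invFun r i := r (i - x)
  left_inv r := by simp
  right_inv r := by simp

@[simp]
lemma translatePerm_apply (x : G) (r : G → α) (i : G) : translatePerm x r i = r (i + x) := rfl

lemma translatePerm_pow (x : G) (j : ℕ) :
    (translatePerm x : Equiv.Perm (G → α)) ^ j = translatePerm (j • x) := by
  induction j with
  | zero => ext; simp
  | succ j ih => ext r i; simp [pow_succ', ih, succ_nsmul', add_assoc]

lemma fixedPoints_translatePerm_of_multiples_eq_top {x : G}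
    (hx : AddSubmonoid.multiples x = ⊤) :
    Function.fixedPoints (translatePerm x : Equiv.Perm (G → α)) =
      Set.range (Function.const G) := by
  ext r
  refine ⟨fun hr => ⟨r 0, funext fun i => ?_⟩, ?_⟩
  · obtain ⟨j, rfl⟩ : i ∈ AddSubmonoid.multiples x := hx ▸ AddSubmonoid.mem_top i
    have := congrFun (hr.perm_pow j) 0
    rw [translatePerm_pow, translatePerm_apply, zero_add] at this
    exact this.symm
  · rintro ⟨a, rfl⟩
    rfl

lemma ncard_fixedPoints_translatePerm_of_prime_card {p : ℕ} [Fact p.Prime]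
    (hG : Nat.card G = p) {x : G} (hx : x ≠ 0) :
    (Function.fixedPoints (translatePerm x : Equiv.Perm (G → α))).ncard = Nat.card α := by
  rw [fixedPoints_translatePerm_of_multiples_eq_top,
    Set.ncard_range_of_injective Function.const_injective]
  · exact (AddSubmonoid.eq_top_iff' _).mpr fun _ => mem_multiples_of_prime_card hG hx

end Translation

lemma shiftT_eq_permMatrix (d N : ℕ) [NeZero N] :
    shiftT d N = (translatePerm 1).permMatrix ℂ := by
  ext r c
  simp only [shiftT, Matrix.of_apply, PEquiv.toMatrix_apply, Equiv.toPEquiv_apply,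
    Option.mem_def, Option.some.injEq]
  congr 1
  refine propext ⟨fun h => ?_, fun h => ?_⟩ <;> subst h <;> funext i <;> simp

lemma trace_shiftT_pow_of_not_dvd (d N j : ℕ) [NeZero N] (hN : N.Prime) (hj : ¬N ∣ j) :
    trace (shiftT d N ^ j) = d := by
  have : Fact N.Prime := ⟨hN⟩
  replace hj : j • (1 : Fin N) ≠ 0 := by
    open Fin.CommRing in simpa [Fin.natCast_eq_zero] using hj
  rw [shiftT_eq_permMatrix, ← Equiv.Perm.permMatrix_pow, translatePerm_pow, trace_permutation,
    ncard_fixedPoints_translatePerm_of_prime_card (p := N) (by simp) hj]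
  simp

lemma sum_range_exp_two_pi_mul_I (N k : ℕ) [NeZero N] :
    ∑ j ∈ range N, Complex.exp (2 * (Real.pi : ℂ) * Complex.I * (j : ℂ) * (k : ℂ) / (N : ℂ)) =
      if N ∣ k then (N : ℂ) else 0 := by
  set μ := Complex.exp (2 * Real.pi * Complex.I / N)
  have hμ : IsPrimitiveRoot μ N := Complex.isPrimitiveRoot_exp N (NeZero.ne N)
  have hterm : ∀ j : ℕ,
      Complex.exp (2 * (Real.pi : ℂ) * Complex.I * (j : ℂ) * (k : ℂ) / (N : ℂ)) = (μ ^ k) ^ j := by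
    intro j
    rw [← pow_mul, ← Complex.exp_nat_mul]
    push_cast
    ring_nf
  simp_rw [hterm]
  split_ifs with hk
  · simp [(hμ.pow_eq_one_iff_dvd k).mpr hk]
  · have hne : μ ^ k - 1 ≠ 0 := sub_ne_zero.mpr fun h => hk ((hμ.pow_eq_one_iff_dvd k).mp h)
    have hroot : (μ ^ k) ^ N = 1 := by rw [← pow_mul, mul_comm, pow_mul, hμ.pow_eq_one, one_pow]
    have hgeom := geom_sum_mul (μ ^ k) N
    rwa [hroot, sub_self, mul_eq_zero, or_iff_left hne] at hgeom

/-- For `N` prime: `Tr(T_k) = d^N + d(N-1)` if `k = 0`, and `Tr(T_k) = d^N - d` otherwise. -/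
theorem stmt_3 (d N k : ℕ) [NeZero N] (hN : N.Prime) (hk : k < N) :
    Matrix.trace (momProj d N k) =
      if k = 0 then (d : ℂ) ^ N + (d : ℂ) * ((N : ℂ) - 1) else (d : ℂ) ^ N - (d : ℂ) := by
  have h0 : 0 ∈ range N := mem_range.mpr hN.pos
  have hdvd : N ∣ k ↔ k = 0 := ⟨fun h => Nat.eq_zero_of_dvd_of_lt h hk, fun h => h ▸ dvd_zero N⟩
  have hrest : ∀ j ∈ (range N).erase 0, trace (shiftT d N ^ j) = d := fun j hj =>
    trace_shiftT_pow_of_not_dvd d N j hN fun h =>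
      (mem_erase.mp hj).1 (Nat.eq_zero_of_dvd_of_lt h (mem_range.mp (mem_erase.mp hj).2))
  rw [momProj, trace_sum, ← add_sum_erase _ _ h0]
  simp only [trace_smul, smul_eq_mul, pow_zero, trace_one, Fintype.card_fun, Fintype.card_fin]
  rw [sum_congr rfl fun j hj => by rw [hrest j hj], ← sum_mul, sum_erase_eq_sub h0,
    sum_range_exp_two_pi_mul_I]
  simp only [hdvd]
  split_ifs <;> simp <;> ring
end

section
/- Split the N sites into a subsystem A of size N_A and B of size N_B = N - N_A. The partial trace over B of the cyclic shift operator T on (ℂ^2)^{⊗N} equals the cyclic shift operator T_A on (ℂ^2)^{⊗N_A}: Tr_B(T) = T_A. -/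
open Matrix

/-- Partial trace over the last `N_B` qubits (subsystem `B`) of an operator on
`N_A + N_B` qubits: `Tr_B(X) = Σ_b (I_A ⊗ ⟨b|) X (I_A ⊗ |b⟩)`. -/
noncomputable def ptraceB (NA NB : ℕ)
    (X : Matrix (Fin (NA + NB) → Fin 2) (Fin (NA + NB) → Fin 2) ℂ) :
    Matrix (Fin NA → Fin 2) (Fin NA → Fin 2) ℂ :=
  Matrix.of fun a a' => ∑ b : Fin NB → Fin 2, X (Fin.append a b) (Fin.append a' b)

/-!
Write a configuration of `A ∪ B` as `append a b`. The shift of `append a' b` equals `append a b`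
exactly when every site of `B` copies its left neighbour, i.e. `b` is constant with value the last
site `a' (-1)` of `A`; the wrap-around site `0` of `A` then receives that same value, so the
remaining condition is `a = T_A a'`. Hence for each `a, a'` exactly one `b` contributes to
`Tr_B(T) a a'`, and only when `a` is the shift of `a'`.
-/

namespace Fin

variable {m n : ℕ}

theorem val_sub_one [NeZero n] (j : Fin n) :
    ((j - 1 : Fin n) : ℕ) = if (j : ℕ) = 0 then n - 1 else j - 1 := by
  obtain ⟨n, rfl⟩ := Nat.exists_eq_succ_of_ne_zero (NeZero.ne n)
  rw [coe_sub_one]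
  simp only [← val_eq_zero_iff, Nat.succ_sub_one]

theorem val_neg_one [NeZero n] : ((-1 : Fin n) : ℕ) = n - 1 := by
  simp [← zero_sub, val_sub_one]

section

variable [NeZero m]

theorem castAdd_sub_one {i : Fin m} (hi : i ≠ 0) :
    castAdd n i - 1 = castAdd n (i - 1) := by
  rw [← val_ne_zero_iff] at hi
  ext; simp [val_sub_one, hi]

theorem val_castAdd_zero_sub_one :
    ((castAdd n (0 : Fin m) - 1 : Fin (m + n)) : ℕ) = m + n - 1 := by
  simp [val_sub_one]

theorem natAdd_sub_one_of_val_eq_zero {k : Fin n} (hk : (k : ℕ) = 0) :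
    natAdd m k - 1 = castAdd n (-1) := by
  ext; simp [val_sub_one, val_neg_one, hk, NeZero.ne m]

end

theorem natAdd_sub_one_of_val_eq_succ [NeZero (m + n)] {k l : Fin n} (hkl : (k : ℕ) = l + 1) :
    natAdd m k - 1 = natAdd m l := by
  ext; simp [val_sub_one, hkl]

section Shift

variable {α : Type*} [NeZero m] {a a' : Fin m → α} {b : Fin n → α}

theorem eq_neg_one_of_append_eq_shift_append
    (h : append a b = fun j => append a' b (j - 1)) (k : Fin n) : b k = a' (-1) := by
  obtain ⟨k, hk⟩ := k
  induction k with
  | zero =>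
    have hk := congrFun h (natAdd m ⟨0, hk⟩)
    rwa [append_right, natAdd_sub_one_of_val_eq_zero rfl, append_left] at hk
  | succ k ih =>
    have hk := congrFun h (natAdd m ⟨k + 1, hk⟩)
    rw [append_right, natAdd_sub_one_of_val_eq_succ (l := ⟨k, by omega⟩) rfl, append_right] at hk
    rw [hk, ih]

theorem append_castAdd_sub_one_of_eq_neg_one (hb : ∀ k, b k = a' (-1)) (i : Fin m) :
    append a' b (castAdd n i - 1) = a' (i - 1) := by
  by_cases hi : i = 0
  · subst hi
    have hlast := val_castAdd_zero_sub_one (m := m) (n := n)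
    rw [zero_sub]
    generalize castAdd n (0 : Fin m) - 1 = y at hlast ⊢
    induction y using addCases with
    | left i' =>
      rw [append_left]
      congr
      ext
      rw [val_castAdd] at hlast
      rw [val_neg_one]
      omega
    | right k => rw [append_right, hb]
  · rw [castAdd_sub_one hi, append_left]

theorem append_natAdd_sub_one_of_eq_neg_one (hb : ∀ k, b k = a' (-1)) (k : Fin n) :
    append a' b (natAdd m k - 1) = a' (-1) := by
  obtain ⟨_ | k, hk⟩ := k
  · rw [natAdd_sub_one_of_val_eq_zero rfl, append_left]
  · rw [natAdd_sub_one_of_val_eq_succ (l := ⟨k, by omega⟩) rfl, append_right, hb]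

theorem append_eq_shift_append_iff_of_eq_neg_one (hb : ∀ k, b k = a' (-1)) :
    (append a b = fun j => append a' b (j - 1)) ↔ a = fun i => a' (i - 1) := by
  constructor
  · intro h
    funext i
    have hi := congrFun h (castAdd n i)
    rwa [append_left, append_castAdd_sub_one_of_eq_neg_one hb] at hi
  · intro ha
    funext j
    induction j using addCases with
    | left i => rw [append_left, append_castAdd_sub_one_of_eq_neg_one hb, ha]
    | right k => rw [append_right, append_natAdd_sub_one_of_eq_neg_one hb, hb]

theorem append_eq_shift_append_iff :
    (append a b = fun j => append a' b (j - 1)) ↔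
      (a = fun i => a' (i - 1)) ∧ b = fun _ => a' (-1) := by
  constructor
  · intro h
    have hb := eq_neg_one_of_append_eq_shift_append h
    exact ⟨(append_eq_shift_append_iff_of_eq_neg_one hb).1 h, funext hb⟩
  · rintro ⟨ha, rfl⟩
    exact (append_eq_shift_append_iff_of_eq_neg_one fun _ => rfl).2 ha

end Shift

end Fin

theorem stmt_5_general (NA NB : ℕ) [NeZero NA] :
    ptraceB NA NB (shiftT 2 (NA + NB)) = shiftT 2 NA := by
  ext a a'
  simp [ptraceB, shiftT, Fin.append_eq_shift_append_iff, ite_and]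

/-- The partial trace over `B` of the cyclic shift on `N = N_A + N_B` qubits equals
the cyclic shift on the `N_A` qubits of `A`: `Tr_B(T) = T_A`. -/
theorem stmt_5 (NA NB : ℕ) [NeZero NA] [NeZero NB] [NeZero (NA + NB)] :
    ptraceB NA NB (shiftT 2 (NA + NB)) = shiftT 2 NA :=
  stmt_5_general NA NB
end

section
/- Let U act on a bipartite space H_A ⊗ H_B with dim H_A = dim H_B = d, and let P = O_1 ⊗ I, Q = I ⊗ O_2 with O_1, O_2 drawn independently from the unit-normalized GUE on d×d matrices. Then the averaged four-point correlator satisfies E[Tr(U† P U Q U† P U Q)]/d² = (1/d²) Tr(S_AA U^{†⊗2} S_AA U^{⊗2}), where S_AA is the swap of the two A-factors in (H_A ⊗ H_B)^{⊗2}, and the averaged two-point correlator E[Tr(U† P² U Q²)]/d² = d². -/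
/-!
By the replica identity `Tr(XY) = Tr(S (X ⊗ Y))`, with `S` the swap of the two copies, the
four-point correlator is the trace of `S (U† ⊗ U†)(P ⊗ P)(U ⊗ U)(Q ⊗ Q)`, which is linear in
`P ⊗ P` and in `Q ⊗ Q`. Averaging replaces `O ⊗ O` by the swap `F`, hence `P ⊗ P` by `S_AA` and
`Q ⊗ Q` by `S_BB`, and `S_BB S = S_AA` collapses the result by cyclicity of the trace.
The two-point correlator is linear in `P²` and `Q²`, whose averages are `d I`, and unitarity of
`U` leaves `d² Tr I = d⁴`.
-/

open MeasureTheory Matrix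
open scoped Kronecker

noncomputable instance matrixMeasurableSpace {m n : Type*} :
    MeasurableSpace (Matrix m n ℂ) :=
  inferInstanceAs (MeasurableSpace (m → n → ℂ))

/-- The swap operator `F` on `ℂ^d ⊗ ℂ^d`. -/
noncomputable def swapM (d : ℕ) : Matrix (Fin d × Fin d) (Fin d × Fin d) ℂ :=
  Matrix.of fun r c => if r = Prod.swap c then 1 else 0

/-- The operator `S_AA` on `(H_A ⊗ H_B)^{⊗2}` swapping the `A`-components of the two
replicas. -/
noncomputable def SAA (d : ℕ) :
    Matrix ((Fin d × Fin d) × (Fin d × Fin d)) ((Fin d × Fin d) × (Fin d × Fin d)) ℂ :=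
  Matrix.of fun r c => if r = ((c.2.1, c.1.2), (c.1.1, c.2.2)) then 1 else 0

section SwapMatrix

variable {R n : Type*} [Fintype n] [DecidableEq n]

variable (R n) in
def swapMatrix [Zero R] [One R] : Matrix (n × n) (n × n) R :=
  of fun r c => if r.swap = c then 1 else 0

theorem trace_mul_eq_trace_swapMatrix_mul_kronecker [CommSemiring R] (M N : Matrix n n R) :
    trace (M * N) = trace (swapMatrix R n * (M ⊗ₖ N)) := by
  simp only [trace, diag, mul_apply, swapMatrix, of_apply, ite_mul, one_mul, zero_mul,
    Finset.sum_ite_eq, Finset.mem_univ, if_true]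
  rw [Fintype.sum_prod_type, Finset.sum_comm]
  simp only [Prod.swap_prod_mk, kroneckerMap_apply]

end SwapMatrix

theorem kronecker_kronecker_kronecker_comm {α l m n p q r s t : Type*} [CommSemigroup α]
    (A : Matrix l m α) (B : Matrix n p α) (C : Matrix q r α) (D : Matrix s t α) :
    (A ⊗ₖ B) ⊗ₖ (C ⊗ₖ D) = ((A ⊗ₖ C) ⊗ₖ (B ⊗ₖ D)).submatrix
      (Equiv.prodProdProdComm l n q s) (Equiv.prodProdProdComm m p r t) := by
  ext ⟨⟨_, _⟩, _, _⟩ ⟨⟨_, _⟩, _, _⟩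
  simp [mul_mul_mul_comm]

/-- `S_BB`, the swap of the `B`-components of the two replicas. -/
noncomputable def SBB (d : ℕ) :
    Matrix ((Fin d × Fin d) × (Fin d × Fin d)) ((Fin d × Fin d) × (Fin d × Fin d)) ℂ :=
  Matrix.of fun r c => if r = ((c.1.1, c.2.2), (c.2.1, c.1.2)) then 1 else 0

section ReplicaSwaps

variable (d : ℕ)

theorem SAA_eq_submatrix :
    SAA d = (swapM d ⊗ₖ (1 : Matrix (Fin d × Fin d) (Fin d × Fin d) ℂ)).submatrix
      (Equiv.prodProdProdComm _ _ _ _) (Equiv.prodProdProdComm _ _ _ _) := by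
  ext ⟨⟨_, _⟩, _, _⟩ ⟨⟨_, _⟩, _, _⟩
  simp only [SAA, swapM, of_apply, submatrix_apply, kroneckerMap_apply, one_apply]
  aesop

theorem SBB_eq_submatrix :
    SBB d = ((1 : Matrix (Fin d × Fin d) (Fin d × Fin d) ℂ) ⊗ₖ swapM d).submatrix
      (Equiv.prodProdProdComm _ _ _ _) (Equiv.prodProdProdComm _ _ _ _) := by
  ext ⟨⟨_, _⟩, _, _⟩ ⟨⟨_, _⟩, _, _⟩
  simp only [SBB, swapM, of_apply, submatrix_apply, kroneckerMap_apply, one_apply]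
  aesop

theorem SBB_mul_swapMatrix : SBB d * swapMatrix ℂ (Fin d × Fin d) = SAA d := by
  ext r c
  simp [mul_apply, SBB, swapMatrix, SAA, Prod.swap_eq_iff_eq_swap]

end ReplicaSwaps

section EntrywiseIntegral

variable {α 𝕜 l m n p : Type*} [MeasurableSpace α] [RCLike 𝕜]

/-- Matrices carry no global norm in Mathlib, so integrals of matrix-valued maps are taken
entrywise. -/
def HasEntrywiseIntegral (μ : Measure α) (g : α → Matrix m n 𝕜) (G : Matrix m n 𝕜) : Prop :=
  ∀ i j, Integrable (fun x => g x i j) μ ∧ ∫ x, g x i j ∂μ = G i j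

namespace HasEntrywiseIntegral

variable {μ : Measure α} {g : α → Matrix m n 𝕜} {G : Matrix m n 𝕜}

theorem submatrix (h : HasEntrywiseIntegral μ g G) (e : l → m) (f : p → n) :
    HasEntrywiseIntegral μ (fun x => (g x).submatrix e f) (G.submatrix e f) :=
  fun i j => h (e i) (f j)

theorem kronecker_const (h : HasEntrywiseIntegral μ g G) (B : Matrix l p 𝕜) :
    HasEntrywiseIntegral μ (fun x => g x ⊗ₖ B) (G ⊗ₖ B) :=
  fun i j => ⟨(h i.1 j.1).1.mul_const _, by simp [integral_mul_const, (h i.1 j.1).2]⟩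

theorem const_kronecker (h : HasEntrywiseIntegral μ g G) (B : Matrix l p 𝕜) :
    HasEntrywiseIntegral μ (fun x => B ⊗ₖ g x) (B ⊗ₖ G) :=
  fun i j => ⟨(h i.2 j.2).1.const_mul _, by simp [integral_const_mul, (h i.2 j.2).2]⟩

theorem integral_trace_mul [Fintype m] [Fintype n] (h : HasEntrywiseIntegral μ g G)
    (W : Matrix n m 𝕜) : ∫ x, trace (W * g x) ∂μ = trace (W * G) := by
  have trace_mul_eq (X : Matrix m n 𝕜) : trace (W * X) = ∑ k, ∑ i, W k i * X i k := by
    simp only [trace, diag, mul_apply]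
  simp only [trace_mul_eq]
  rw [integral_finsetSum _ fun k _ =>
    integrable_finsetSum _ fun i _ => (h i k).1.const_mul (W k i)]
  refine Finset.sum_congr rfl fun k _ => ?_
  rw [integral_finsetSum _ fun i _ => (h i k).1.const_mul (W k i)]
  simp only [integral_const_mul, (h _ k).2]

theorem kronecker_one_mul_self [Fintype n] [Fintype l] [DecidableEq l] {g : α → Matrix n n 𝕜}
    {G : Matrix n n 𝕜} (h : HasEntrywiseIntegral μ (fun x => g x * g x) G) :
    HasEntrywiseIntegral μ (fun x => (g x ⊗ₖ (1 : Matrix l l 𝕜)) * (g x ⊗ₖ (1 : Matrix l l 𝕜)))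
      (G ⊗ₖ 1) := by
  convert h.kronecker_const (1 : Matrix l l 𝕜) using 2 with x
  rw [← mul_kronecker_mul, mul_one]

theorem one_kronecker_mul_self [Fintype n] [Fintype l] [DecidableEq l] {g : α → Matrix n n 𝕜}
    {G : Matrix n n 𝕜} (h : HasEntrywiseIntegral μ (fun x => g x * g x) G) :
    HasEntrywiseIntegral μ (fun x => ((1 : Matrix l l 𝕜) ⊗ₖ g x) * ((1 : Matrix l l 𝕜) ⊗ₖ g x))
      (1 ⊗ₖ G) := by
  convert h.const_kronecker (1 : Matrix l l 𝕜) using 2 with x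
  rw [← mul_kronecker_mul, mul_one]

end HasEntrywiseIntegral

end EntrywiseIntegral

section ReplicaIntegrals

variable {d : ℕ} {μ : Measure (Matrix (Fin d) (Fin d) ℂ)}

theorem HasEntrywiseIntegral.kronecker_one_replica
    (h : HasEntrywiseIntegral μ (fun O => O ⊗ₖ O) (swapM d)) :
    HasEntrywiseIntegral μ (fun O => (O ⊗ₖ (1 : Matrix (Fin d) (Fin d) ℂ)) ⊗ₖ (O ⊗ₖ 1))
      (SAA d) := by
  convert (h.kronecker_const (1 : Matrix (Fin d × Fin d) (Fin d × Fin d) ℂ)).submatrix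
    (Equiv.prodProdProdComm _ _ _ _) (Equiv.prodProdProdComm _ _ _ _) using 1
  · ext1 O
    rw [kronecker_kronecker_kronecker_comm, one_kronecker_one]
  · exact SAA_eq_submatrix d

theorem HasEntrywiseIntegral.one_kronecker_replica
    (h : HasEntrywiseIntegral μ (fun O => O ⊗ₖ O) (swapM d)) :
    HasEntrywiseIntegral μ (fun O => ((1 : Matrix (Fin d) (Fin d) ℂ) ⊗ₖ O) ⊗ₖ (1 ⊗ₖ O))
      (SBB d) := by
  convert (h.const_kronecker (1 : Matrix (Fin d × Fin d) (Fin d × Fin d) ℂ)).submatrix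
    (Equiv.prodProdProdComm _ _ _ _) (Equiv.prodProdProdComm _ _ _ _) using 1
  · ext1 O
    rw [kronecker_kronecker_kronecker_comm, one_kronecker_one]
  · exact SBB_eq_submatrix d

end ReplicaIntegrals

section Correlators

variable {α β 𝕜 n : Type*} [MeasurableSpace α] [MeasurableSpace β] [RCLike 𝕜]
  [Fintype n] {μ : Measure α} {ν : Measure β} {P : α → Matrix n n 𝕜} {Q : β → Matrix n n 𝕜}

theorem integral_integral_trace_two_point {SP SQ : Matrix n n 𝕜} (V U : Matrix n n 𝕜)
    (hP : HasEntrywiseIntegral μ (fun x => P x * P x) SP)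
    (hQ : HasEntrywiseIntegral ν (fun y => Q y * Q y) SQ) :
    ∫ x, ∫ y, trace (V * P x * P x * U * Q y * Q y) ∂ν ∂μ = trace (V * SP * U * SQ) :=
  calc ∫ x, ∫ y, trace (V * P x * P x * U * Q y * Q y) ∂ν ∂μ
      = ∫ x, ∫ y, trace ((V * (P x * P x) * U) * (Q y * Q y)) ∂ν ∂μ := by
        simp only [Matrix.mul_assoc]
    _ = ∫ x, trace ((U * SQ * V) * (P x * P x)) ∂μ := by
        simp_rw [hQ.integral_trace_mul]
        congr 1 with x
        simpa only [Matrix.mul_assoc] using trace_mul_comm (V * (P x * P x)) (U * SQ)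
    _ = trace (U * SQ * V * SP) := hP.integral_trace_mul _
    _ = trace (V * SP * U * SQ) := by
        simpa only [Matrix.mul_assoc] using trace_mul_comm (U * SQ) (V * SP)

theorem integral_integral_trace_four_point [DecidableEq n] {SP SQ : Matrix (n × n) (n × n) 𝕜}
    (V U : Matrix n n 𝕜)
    (hP : HasEntrywiseIntegral μ (fun x => P x ⊗ₖ P x) SP)
    (hQ : HasEntrywiseIntegral ν (fun y => Q y ⊗ₖ Q y) SQ) :
    ∫ x, ∫ y, trace (V * P x * U * Q y * V * P x * U * Q y) ∂ν ∂μ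
      = trace (swapMatrix 𝕜 n * (V ⊗ₖ V) * SP * (U ⊗ₖ U) * SQ) := by
  have replica (x : α) (y : β) : trace (V * P x * U * Q y * V * P x * U * Q y)
      = trace ((swapMatrix 𝕜 n * (V ⊗ₖ V) * (P x ⊗ₖ P x) * (U ⊗ₖ U)) * (Q y ⊗ₖ Q y)) := by
    rw [show V * P x * U * Q y * V * P x * U * Q y
        = (V * P x * U * Q y) * (V * P x * U * Q y) by simp only [Matrix.mul_assoc],
      trace_mul_eq_trace_swapMatrix_mul_kronecker]
    simp only [mul_kronecker_mul, Matrix.mul_assoc]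
  calc ∫ x, ∫ y, trace (V * P x * U * Q y * V * P x * U * Q y) ∂ν ∂μ
      = ∫ x, ∫ y, trace ((swapMatrix 𝕜 n * (V ⊗ₖ V) * (P x ⊗ₖ P x) * (U ⊗ₖ U)) *
          (Q y ⊗ₖ Q y)) ∂ν ∂μ := by
        simp_rw [replica]
    _ = ∫ x, trace (((U ⊗ₖ U) * SQ * swapMatrix 𝕜 n * (V ⊗ₖ V)) * (P x ⊗ₖ P x)) ∂μ := by
        simp_rw [hQ.integral_trace_mul]
        congr 1 with x
        simpa only [Matrix.mul_assoc] using
          trace_mul_comm (swapMatrix 𝕜 n * (V ⊗ₖ V) * (P x ⊗ₖ P x)) ((U ⊗ₖ U) * SQ)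
    _ = trace ((U ⊗ₖ U) * SQ * swapMatrix 𝕜 n * (V ⊗ₖ V) * SP) := hP.integral_trace_mul _
    _ = trace (swapMatrix 𝕜 n * (V ⊗ₖ V) * SP * (U ⊗ₖ U) * SQ) := by
        simpa only [Matrix.mul_assoc] using
          trace_mul_comm ((U ⊗ₖ U) * SQ) (swapMatrix 𝕜 n * (V ⊗ₖ V) * SP)

end Correlators

theorem stmt_12_general (d : ℕ)
    (U : Matrix (Fin d × Fin d) (Fin d × Fin d) ℂ)
    (hU : U ∈ Matrix.unitaryGroup (Fin d × Fin d) ℂ)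
    (μ₁ μ₂ : Measure (Matrix (Fin d) (Fin d) ℂ))
    (h₁kron : ∀ p q, (∫ O, (O ⊗ₖ O) p q ∂μ₁) = swapM d p q)
    (h₂kron : ∀ p q, (∫ O, (O ⊗ₖ O) p q ∂μ₂) = swapM d p q)
    (h₁sq : ∀ i j, (∫ O, (O * O) i j ∂μ₁) =
      ((d : ℂ) • (1 : Matrix (Fin d) (Fin d) ℂ)) i j)
    (h₂sq : ∀ i j, (∫ O, (O * O) i j ∂μ₂) =
      ((d : ℂ) • (1 : Matrix (Fin d) (Fin d) ℂ)) i j)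
    (h₁intk : ∀ p q, Integrable (fun O => (O ⊗ₖ O) p q) μ₁)
    (h₂intk : ∀ p q, Integrable (fun O => (O ⊗ₖ O) p q) μ₂)
    (h₁ints : ∀ i j, Integrable (fun O => (O * O) i j) μ₁)
    (h₂ints : ∀ i j, Integrable (fun O => (O * O) i j) μ₂) :
    ((d : ℂ) ^ 2)⁻¹ *
        (∫ O₁, ∫ O₂, Matrix.trace
          (Uᴴ * (O₁ ⊗ₖ (1 : Matrix (Fin d) (Fin d) ℂ)) * U *
            ((1 : Matrix (Fin d) (Fin d) ℂ) ⊗ₖ O₂) *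
            Uᴴ * (O₁ ⊗ₖ (1 : Matrix (Fin d) (Fin d) ℂ)) * U *
            ((1 : Matrix (Fin d) (Fin d) ℂ) ⊗ₖ O₂)) ∂μ₂ ∂μ₁)
      = ((d : ℂ) ^ 2)⁻¹ * Matrix.trace (SAA d * (Uᴴ ⊗ₖ Uᴴ) * SAA d * (U ⊗ₖ U)) ∧
    ((d : ℂ) ^ 2)⁻¹ *
        (∫ O₁, ∫ O₂, Matrix.trace
          (Uᴴ * (O₁ ⊗ₖ (1 : Matrix (Fin d) (Fin d) ℂ)) *
            (O₁ ⊗ₖ (1 : Matrix (Fin d) (Fin d) ℂ)) * U *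
            ((1 : Matrix (Fin d) (Fin d) ℂ) ⊗ₖ O₂) *
            ((1 : Matrix (Fin d) (Fin d) ℂ) ⊗ₖ O₂)) ∂μ₂ ∂μ₁)
      = (d : ℂ) ^ 2 := by
  have hP := HasEntrywiseIntegral.kronecker_one_replica fun p q => ⟨h₁intk p q, h₁kron p q⟩
  have hQ := HasEntrywiseIntegral.one_kronecker_replica fun p q => ⟨h₂intk p q, h₂kron p q⟩
  have hP₂ : HasEntrywiseIntegral μ₁ (fun O => (O ⊗ₖ (1 : Matrix (Fin d) (Fin d) ℂ)) * (O ⊗ₖ 1))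
      ((d : ℂ) • 1) := by
    simpa only [smul_kronecker, one_kronecker_one] using
      HasEntrywiseIntegral.kronecker_one_mul_self fun i j => ⟨h₁ints i j, h₁sq i j⟩
  have hQ₂ : HasEntrywiseIntegral μ₂ (fun O => ((1 : Matrix (Fin d) (Fin d) ℂ) ⊗ₖ O) * (1 ⊗ₖ O))
      ((d : ℂ) • 1) := by
    simpa only [kronecker_smul, one_kronecker_one] using
      HasEntrywiseIntegral.one_kronecker_mul_self fun i j => ⟨h₂ints i j, h₂sq i j⟩
  refine ⟨?_, ?_⟩
  · rw [integral_integral_trace_four_point (P := fun O => O ⊗ₖ 1) (Q := fun O => 1 ⊗ₖ O)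
      _ _ hP hQ, trace_mul_comm]
    simp only [← Matrix.mul_assoc, SBB_mul_swapMatrix]
  · rw [integral_integral_trace_two_point (P := fun O => O ⊗ₖ 1) (Q := fun O => 1 ⊗ₖ O)
      _ _ hP₂ hQ₂]
    have hUU : Uᴴ * U = 1 := mem_unitaryGroup_iff'.mp hU
    simp only [Algebra.mul_smul_comm, mul_one, Algebra.smul_mul_assoc, hUU, trace_smul, trace_one,
      Fintype.card_prod, Fintype.card_fin, Nat.cast_mul, smul_eq_mul]
    field_simp

/-- For `P = O₁ ⊗ I`, `Q = I ⊗ O₂` with `O₁, O₂` independent unit-normalized GUE matrices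
(unitarily invariant Hermitian ensembles with `E[O ⊗ O] = F` and `E[O²] = dI`):
`E[Tr(U†PUQU†PUQ)]/d² = (1/d²) Tr(S_AA U^{†⊗2} S_AA U^{⊗2})` and
`E[Tr(U†P²UQ²)]/d² = d²`. -/
theorem stmt_12 (d : ℕ) (hd : 0 < d)
    (U : Matrix (Fin d × Fin d) (Fin d × Fin d) ℂ)
    (hU : U ∈ Matrix.unitaryGroup (Fin d × Fin d) ℂ)
    (μ₁ μ₂ : Measure (Matrix (Fin d) (Fin d) ℂ))
    [IsProbabilityMeasure μ₁] [IsProbabilityMeasure μ₂]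
    (h₁herm : ∀ᵐ O ∂μ₁, O.IsHermitian) (h₂herm : ∀ᵐ O ∂μ₂, O.IsHermitian)
    (h₁kron : ∀ p q, (∫ O, (O ⊗ₖ O) p q ∂μ₁) = swapM d p q)
    (h₂kron : ∀ p q, (∫ O, (O ⊗ₖ O) p q ∂μ₂) = swapM d p q)
    (h₁sq : ∀ i j, (∫ O, (O * O) i j ∂μ₁) =
      ((d : ℂ) • (1 : Matrix (Fin d) (Fin d) ℂ)) i j)
    (h₂sq : ∀ i j, (∫ O, (O * O) i j ∂μ₂) =
      ((d : ℂ) • (1 : Matrix (Fin d) (Fin d) ℂ)) i j)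
    (h₁intk : ∀ p q, Integrable (fun O => (O ⊗ₖ O) p q) μ₁)
    (h₂intk : ∀ p q, Integrable (fun O => (O ⊗ₖ O) p q) μ₂)
    (h₁ints : ∀ i j, Integrable (fun O => (O * O) i j) μ₁)
    (h₂ints : ∀ i j, Integrable (fun O => (O * O) i j) μ₂) :
    ((d : ℂ) ^ 2)⁻¹ *
        (∫ O₁, ∫ O₂, Matrix.trace
          (Uᴴ * (O₁ ⊗ₖ (1 : Matrix (Fin d) (Fin d) ℂ)) * U *
            ((1 : Matrix (Fin d) (Fin d) ℂ) ⊗ₖ O₂) *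
            Uᴴ * (O₁ ⊗ₖ (1 : Matrix (Fin d) (Fin d) ℂ)) * U *
            ((1 : Matrix (Fin d) (Fin d) ℂ) ⊗ₖ O₂)) ∂μ₂ ∂μ₁)
      = ((d : ℂ) ^ 2)⁻¹ * Matrix.trace (SAA d * (Uᴴ ⊗ₖ Uᴴ) * SAA d * (U ⊗ₖ U)) ∧
    ((d : ℂ) ^ 2)⁻¹ *
        (∫ O₁, ∫ O₂, Matrix.trace
          (Uᴴ * (O₁ ⊗ₖ (1 : Matrix (Fin d) (Fin d) ℂ)) *
            (O₁ ⊗ₖ (1 : Matrix (Fin d) (Fin d) ℂ)) * U *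
            ((1 : Matrix (Fin d) (Fin d) ℂ) ⊗ₖ O₂) *
            ((1 : Matrix (Fin d) (Fin d) ℂ) ⊗ₖ O₂)) ∂μ₂ ∂μ₁)
      = (d : ℂ) ^ 2 :=
  stmt_12_general d U hU μ₁ μ₂ h₁kron h₂kron h₁sq h₂sq h₁intk h₂intk h₁ints h₂ints
end
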